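/- Let v₁ = (0,0,0), v₂ = (1000,0,0), v₃ = (26,228,0), v₄ = (476,−198,785), v₅ = (548,659,276), v₆ = (−97,−18,−77), v₇ = (841,171,212), v₈ = (356,358,−642), v₉ = (89,68,277), v₁₀ = (632,742,−224) in ℝ³, and define edge vectors eᵢ = v_{i+1} − vᵢ for i = 1, …, 9 and e₁₀ = v₁ − v₁₀. Then there is no w ∈ ℝ³ such that (−1)^{i+1} (w · eᵢ) > 0 for every i ∈ {1, …, 10}. -/

import Mathlib

/-- The vertices of the paper's 10-stick polygonal realization of the knot `8_7`.
Here `vert8_7 i` is the paper's vertex `v_(i+1)`. -/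
noncomputable def vert8_7 : Fin 10 → (Fin 3 → ℝ) :=
  ![![0, 0, 0], ![1000, 0, 0], ![26, 228, 0], ![476, -198, 785], ![548, 659, 276], ![-97, -18, -77], ![841, 171, 212], ![356, 358, -642], ![89, 68, 277], ![632, 742, -224]]

/-- The edge vectors `eᵢ = v_(i+1) − vᵢ` (cyclically, so `e₁₀ = v₁ − v₁₀`);
here `edge8_7 i` is the paper's `e_(i+1)`, using wrap-around addition on `Fin 10`. -/
noncomputable def edge8_7 (i : Fin 10) : Fin 3 → ℝ :=
  vert8_7 (i + 1) - vert8_7 i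

/-!
By Farkas' lemma it suffices to exhibit a nonnegative, nonzero combination of the signed
edges `(-1)^i • eᵢ` that vanishes: a direction `w` pairing positively with every signed edge
would pair positively with that combination. Four signed edges suffice: `e₁, e₃, -e₆, e₉`
are linearly dependent in ℝ³ with positive weights, obtained by solving the 3×3 system with
the weight of `e₉` fixed and clearing denominators.
-/

open Finset

theorem LinearMap.not_forall_pos_of_sum_smul_eq_zero {ι M : Type*} [Fintype ι]
    [AddCommGroup M] [Module ℝ M] (φ : M →ₗ[ℝ] ℝ) {f : ι → M} {c : ι → ℝ}
    (hc : ∀ i, 0 ≤ c i) (hc_pos : ∃ i, 0 < c i) (hsum : ∑ i, c i • f i = 0) :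
    ¬ ∀ i, 0 < φ (f i) := by
  intro hφ
  have hpos : 0 < ∑ i, c i * φ (f i) := by
    obtain ⟨i, hi⟩ := hc_pos
    exact sum_pos' (fun j _ => mul_nonneg (hc j) (hφ j).le)
      ⟨i, mem_univ i, mul_pos hi (hφ i)⟩
  have hzero : ∑ i, c i * φ (f i) = 0 := by
    simpa only [map_sum, map_smul, smul_eq_mul, map_zero] using congrArg φ hsum
  exact hpos.ne' hzero

theorem signed_edge8_7_relation :
    ∑ i : Fin 10,
      (![3683197, 0, 57895000, 0, 0, 63132800, 0, 0, 54295800, 0] : Fin 10 → ℝ) i •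
        ((-1 : ℝ) ^ (i : ℕ) • edge8_7 i) = 0 := by
  ext j
  fin_cases j <;> simp [Fin.sum_univ_succ, edge8_7, vert8_7] <;> norm_num

/-- There is no `w ∈ ℝ³` such that `(−1)^(i+1) (w · eᵢ) > 0` for every
`i ∈ {1, …, 10}`: no projection of this polygon (the knot `8_7`) to a line has
5 local maxima. (With 0-based indexing `i : Fin 10`, the sign is `(−1)^i`.) -/
theorem no_alternating_direction_8_7 :
    ¬ ∃ w : Fin 3 → ℝ, ∀ i : Fin 10,
        0 < (-1 : ℝ) ^ (i : ℕ) * ∑ j : Fin 3, w j * edge8_7 i j := by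
  rintro ⟨w, hw⟩
  refine (dotProductBilin ℝ ℝ w).not_forall_pos_of_sum_smul_eq_zero
    (fun i => ?_) ⟨0, by norm_num⟩ signed_edge8_7_relation fun i => ?_
  · fin_cases i <;> norm_num
  · rw [map_smul, smul_eq_mul]
    exact hw i
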